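/- arXiv:2509.11745 — 2 statements merged into one kernel-verified Lean document; each statement's English description precedes it below -/
import Mathlib

section
/- Let s ∈ ℝ^d with nonzero coordinates sorted so that |s_{π(1)}| ≤ ... ≤ |s_{π(d)}|, and let k ≤ d. Then the ℓ²-distance from s to the closed set F_k = {x ∈ ℝ^d : x_i · s_i ≤ 0 for at least k indices i} equals sqrt(Σ_{j=1}^{k} s_{π(j)}²). -/
/-!
A coordinate `i` with `x i * s i ≤ 0` costs at least `s i ^ 2`, since
`(x i - s i) ^ 2 = x i ^ 2 - 2 x i s i + s i ^ 2`. A point of `F_k` thus has squared distance at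
least the sum of `s i ^ 2` over some `k` coordinates, hence at least the sum of the `k` smallest
ones (the `i`-th smallest index of a `k`-subset of `Fin d` is at least `i`); zeroing exactly
those `k` coordinates attains this bound.
-/

open Finset

theorem Fin.val_le_val_of_strictMono {k d : ℕ} {e : Fin k → Fin d} (he : StrictMono e)
    (i : Fin k) : (i : ℕ) ≤ e i := by
  have := card_le_card_of_injOn e (s := Iic i) (t := Iic (e i))
    (fun j hj => mem_Iic.2 (he.monotone (mem_Iic.1 hj))) he.injective.injOn
  simpa using this

theorem Fin.map_castLEEmb_univ {k d : ℕ} (hk : k ≤ d) :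
    univ.map (Fin.castLEEmb hk) = univ.filter fun j : Fin d => (j : ℕ) < k := by
  ext j
  simp only [mem_map, mem_univ, true_and, mem_filter]
  exact ⟨fun ⟨i, hi⟩ => hi ▸ i.2, fun hj => ⟨⟨j, hj⟩, rfl⟩⟩

theorem Fin.sum_filter_val_lt_le_sum {M : Type*} [AddCommMonoid M] [PartialOrder M]
    [IsOrderedAddMonoid M] {d k : ℕ} {f : Fin d → M} (hf : Monotone f) {A : Finset (Fin d)}
    (hA : #A = k) : ∑ j ∈ univ.filter fun j : Fin d => (j : ℕ) < k, f j ≤ ∑ j ∈ A, f j := by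
  have hk : k ≤ d := hA ▸ card_le_univ A |>.trans_eq (Fintype.card_fin d)
  rw [← Fin.map_castLEEmb_univ hk, ← A.map_orderEmbOfFin_univ hA, sum_map, sum_map]
  gcongr with i
  exact hf (Fin.val_le_val_of_strictMono (A.orderEmbOfFin hA).strictMono i)

theorem sq_le_sq_sub_of_mul_nonpos {R : Type*} [CommRing R] [LinearOrder R]
    [IsStrictOrderedRing R] {a b : R} (h : a * b ≤ 0) : b ^ 2 ≤ (a - b) ^ 2 := by
  nlinarith [sq_nonneg a]

theorem sum_sq_le_sum_sq_sub {ι R : Type*} [Fintype ι] [CommRing R] [LinearOrder R]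
    [IsStrictOrderedRing R] {x s : ι → R} {T : Finset ι} (hT : ∀ i ∈ T, x i * s i ≤ 0) :
    ∑ i ∈ T, s i ^ 2 ≤ ∑ i, (x i - s i) ^ 2 :=
  calc ∑ i ∈ T, s i ^ 2 ≤ ∑ i ∈ T, (x i - s i) ^ 2 :=
        sum_le_sum fun i hi => sq_le_sq_sub_of_mul_nonpos (hT i hi)
    _ ≤ ∑ i, (x i - s i) ^ 2 := sum_le_univ_sum_of_nonneg fun _ => sq_nonneg _

theorem sum_sq_piecewise_zero_sub {ι R : Type*} [Fintype ι] [DecidableEq ι] [CommRing R]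
    (s : ι → R) (A : Finset ι) :
    ∑ i, (A.piecewise (0 : ι → R) s i - s i) ^ 2 = ∑ i ∈ A, s i ^ 2 := by
  rw [← sum_add_sum_compl A, add_eq_left.2 (sum_eq_zero fun i hi => by simp [mem_compl.1 hi])]
  exact sum_congr rfl fun i hi => by simp [hi]

theorem sum_sq_smallest_le_sum_sq_sub {d k : ℕ} {s x : Fin d → ℝ} {π : Equiv.Perm (Fin d)}
    (hπ : Monotone fun j => |s (π j)|) (hx : k ≤ #(univ.filter fun i => x i * s i ≤ 0)) :
    ∑ j ∈ univ.filter (fun j : Fin d => (j : ℕ) < k), s (π j) ^ 2 ≤ ∑ i, (x i - s i) ^ 2 := by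
  obtain ⟨T, hT, hTk⟩ := exists_subset_card_eq hx
  calc ∑ j ∈ univ.filter (fun j : Fin d => (j : ℕ) < k), s (π j) ^ 2
      ≤ ∑ j ∈ T.map π.symm.toEmbedding, s (π j) ^ 2 :=
        Fin.sum_filter_val_lt_le_sum (fun a b hab => sq_le_sq.2 (hπ hab)) (by simp [hTk])
    _ = ∑ i ∈ T, s i ^ 2 := by simp [sum_map]
    _ ≤ ∑ i, (x i - s i) ^ 2 := sum_sq_le_sum_sq_sub fun i hi => (mem_filter.1 (hT hi)).2

theorem exists_sum_sq_sub_eq_sum_sq_smallest {d k : ℕ} (hk : k ≤ d) (s : Fin d → ℝ)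
    (π : Equiv.Perm (Fin d)) : ∃ x : Fin d → ℝ, k ≤ #(univ.filter fun i => x i * s i ≤ 0) ∧
      ∑ i, (x i - s i) ^ 2 = ∑ j ∈ univ.filter (fun j : Fin d => (j : ℕ) < k), s (π j) ^ 2 := by
  let A := (univ.filter fun j : Fin d => (j : ℕ) < k).map π.toEmbedding
  refine ⟨A.piecewise 0 s, ?_, by simp [sum_sq_piecewise_zero_sub, A, sum_map]⟩
  calc k = #A := by simp [A, Fin.card_filter_val_lt, hk]
    _ ≤ _ := card_le_card fun i hi => by simp [hi]

theorem stmt_16_general (d k : ℕ) (hk : k ≤ d) (s : Fin d → ℝ)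
    (π : Equiv.Perm (Fin d)) (hπ : Monotone fun j => |s (π j)|) :
    sInf {r : ℝ | ∃ x : Fin d → ℝ,
        k ≤ (Finset.univ.filter fun i => x i * s i ≤ 0).card ∧
        r = Real.sqrt (∑ i, (x i - s i) ^ 2)}
      = Real.sqrt (∑ j ∈ Finset.univ.filter (fun j : Fin d => (j : ℕ) < k), s (π j) ^ 2) := by
  refine IsLeast.csInf_eq ⟨?_, ?_⟩
  · obtain ⟨x, hx, hsum⟩ := exists_sum_sq_sub_eq_sum_sq_smallest hk s π
    exact ⟨x, hx, by rw [hsum]⟩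
  · rintro r ⟨x, hx, rfl⟩
    exact Real.sqrt_le_sqrt (sum_sq_smallest_le_sum_sq_sub hπ hx)

/-- The ℓ²-distance from `s` (all coordinates nonzero) to the set of points whose sign pattern
weakly disagrees with that of `s` in at least `k` coordinates equals the square root of the sum
of the `k` smallest squared coordinates of `s`. -/
theorem stmt_16 (d k : ℕ) (hk : k ≤ d) (s : Fin d → ℝ) (hs : ∀ i, s i ≠ 0)
    (π : Equiv.Perm (Fin d)) (hπ : Monotone fun j => |s (π j)|) :
    sInf {r : ℝ | ∃ x : Fin d → ℝ,
        k ≤ (Finset.univ.filter fun i => x i * s i ≤ 0).card ∧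
        r = Real.sqrt (∑ i, (x i - s i) ^ 2)}
      = Real.sqrt (∑ j ∈ Finset.univ.filter (fun j : Fin d => (j : ℕ) < k), s (π j) ^ 2) :=
  stmt_16_general d k hk s π hπ
end

section
/- Let d ≥ 1, let s ∈ ℝ^d have i.i.d. N(0,1) coordinates, and let M_k denote the sum of the k smallest among s₁²,...,s_d². Then E[M_k] ≤ k · E[s_{(k)}²] where s_{(k)}² is the k-th smallest squared coordinate, and in particular E[M_k] ≤ 4 k (k/d)² · c for some universal constant c when k ≤ d/2; hence the expected squared distortion of flipping the k smallest-magnitude coordinates, 4·E[M_k], is O(k³/d²). -/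
/-!
For the first bound, each of the `k` smallest squares is at most the `k`-th smallest one.

For the second, put `m = ⌊d/k⌋ ≥ 2` and split `k m` coordinates into `k` disjoint blocks of size
`m`. The minimisers of the blocks form a `k`-set, so `M_k` is at most the sum of the `k` block
minima. By the layer-cake formula the expected minimum of `m` squared standard Gaussians is
`∫₀^∞ q(t)^m dt` with `q(t) = P(Z² > t)`. For `t ≤ 1` the density of `Z` is at least `1/8` on
`[-1, 1]`, so `q(t) ≤ 1 - √t/4` and `q(t)^m ≤ exp(-m√t/4)`, whose integral is `32/m²`; for `t ≥ 1`,
`q(t) ≤ q(1) ≤ 3/4` and Chebyshev's `q(t) ≤ 1/t` give `q(t)^m ≤ (3/4)^(m-2)/t²`. Hence every block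
minimum has expectation `O(1/m²) = O(k²/d²)`.
-/

open MeasureTheory ProbabilityTheory Finset

/-- The sum of the `k` smallest among `x 1 ^ 2, …, x d ^ 2`. -/
noncomputable def sumKSmallestSq (d k : ℕ) (x : Fin d → ℝ) : ℝ :=
  sInf {r : ℝ | ∃ S : Finset (Fin d), S.card = k ∧ r = ∑ i ∈ S, x i ^ 2}

/-- The `k`-th smallest among `x 1 ^ 2, …, x d ^ 2`. -/
noncomputable def kthSmallestSq (d k : ℕ) (x : Fin d → ℝ) : ℝ :=
  sInf {r : ℝ | k ≤ (Finset.univ.filter fun i => x i ^ 2 ≤ r).card}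

open Function Real

section Selection

variable {d k : ℕ} (x : Fin d → ℝ)

lemma sumKSmallestSq_eq_iInf :
    sumKSmallestSq d k x = ⨅ S : {S : Finset (Fin d) // #S = k}, ∑ i ∈ S.1, x i ^ 2 := by
  refine congrArg sInf (Set.ext fun r => ?_)
  simp [eq_comm]

lemma sumKSmallestSq_le_sum {S : Finset (Fin d)} (hS : #S = k) :
    sumKSmallestSq d k x ≤ ∑ i ∈ S, x i ^ 2 := by
  rw [sumKSmallestSq_eq_iInf]
  exact ciInf_le (Set.finite_range _).bddBelow (⟨S, hS⟩ : {S : Finset (Fin d) // #S = k})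

lemma sumKSmallestSq_nonneg (hkd : k ≤ d) : 0 ≤ sumKSmallestSq d k x := by
  obtain ⟨S, -, hS⟩ := exists_subset_card_eq (s := (univ : Finset (Fin d))) (by simpa)
  have : Nonempty {S : Finset (Fin d) // #S = k} := ⟨⟨S, hS⟩⟩
  rw [sumKSmallestSq_eq_iInf]
  exact le_ciInf fun S => sum_nonneg fun i _ => sq_nonneg _

lemma sumKSmallestSq_le_sum_univ (hkd : k ≤ d) : sumKSmallestSq d k x ≤ ∑ i, x i ^ 2 := by
  obtain ⟨S, -, hS⟩ := exists_subset_card_eq (s := (univ : Finset (Fin d))) (by simpa)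
  exact (sumKSmallestSq_le_sum x hS).trans
    (sum_le_sum_of_subset_of_nonneg (subset_univ S) fun i _ _ => sq_nonneg _)

lemma measurable_sumKSmallestSq : Measurable (sumKSmallestSq d k) := by
  simp_rw [funext sumKSmallestSq_eq_iInf]
  exact Measurable.iInf fun S => by fun_prop

lemma sumKSmallestSq_le_sum_inf' {ι : Type*} [Fintype ι] (G : ι → Finset (Fin d))
    (hG : Pairwise (Disjoint on G)) (hne : ∀ j, (G j).Nonempty) :
    sumKSmallestSq d (Fintype.card ι) x ≤ ∑ j, (G j).inf' (hne j) fun i => x i ^ 2 := by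
  choose c hcG hc using fun j => exists_mem_eq_inf' (hne j) fun i => x i ^ 2
  have hinj : Injective c := fun j j' h =>
    hG.eq (not_disjoint_iff.mpr ⟨c j, hcG j, h ▸ hcG j'⟩)
  calc sumKSmallestSq d (Fintype.card ι) x ≤ ∑ i ∈ univ.map ⟨c, hinj⟩, x i ^ 2 :=
        sumKSmallestSq_le_sum x (by simp)
    _ = _ := by simp [hc]

lemma exists_isLeast_card_filter_sq_le (hk : 1 ≤ k) (hkd : k ≤ d) :
    ∃ j, IsLeast {r | k ≤ #{i | x i ^ 2 ≤ r}} (x j ^ 2) := by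
  -- every admissible level can be lowered to a value `x j ^ 2` without changing the count
  have lower : ∀ r, k ≤ #{i | x i ^ 2 ≤ r} →
      ∃ j, k ≤ #{i | x i ^ 2 ≤ x j ^ 2} ∧ x j ^ 2 ≤ r := by
    intro r hr
    obtain ⟨j, hj, hmax⟩ := exists_max_image {i | x i ^ 2 ≤ r} (fun i => x i ^ 2)
      (card_pos.mp (by omega))
    refine ⟨j, hr.trans (card_le_card fun i hi => ?_), (mem_filter.mp hj).2⟩
    simpa using hmax i hi
  have : (univ.filter fun j => k ≤ #{i | x i ^ 2 ≤ x j ^ 2}).Nonempty := by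
    obtain ⟨j, hj, -⟩ := lower (∑ i, x i ^ 2) (by
      rw [filter_true_of_mem fun i _ => single_le_sum (fun i _ => sq_nonneg (x i)) (mem_univ i)]
      simpa using hkd)
    exact ⟨j, by simpa using hj⟩
  obtain ⟨j₀, hj₀, hmin⟩ := exists_min_image _ (fun j => x j ^ 2) this
  refine ⟨j₀, (mem_filter.mp hj₀).2, fun r hr => ?_⟩
  obtain ⟨j, hj, hjr⟩ := lower r hr
  exact (hmin j (by simpa using hj)).trans hjr

lemma isLeast_kthSmallestSq (hk : 1 ≤ k) (hkd : k ≤ d) :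
    IsLeast {r | k ≤ #{i | x i ^ 2 ≤ r}} (kthSmallestSq d k x) := by
  obtain ⟨j, hj⟩ := exists_isLeast_card_filter_sq_le x hk hkd
  rwa [kthSmallestSq, hj.csInf_eq]

lemma exists_kthSmallestSq_eq (hk : 1 ≤ k) (hkd : k ≤ d) : ∃ j, kthSmallestSq d k x = x j ^ 2 := by
  obtain ⟨j, hj⟩ := exists_isLeast_card_filter_sq_le x hk hkd
  exact ⟨j, by rw [kthSmallestSq, hj.csInf_eq]⟩

lemma kthSmallestSq_le_iff (hk : 1 ≤ k) (hkd : k ≤ d) {r : ℝ} :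
    kthSmallestSq d k x ≤ r ↔ k ≤ #{i | x i ^ 2 ≤ r} := by
  have h := isLeast_kthSmallestSq x hk hkd
  refine ⟨fun hr => h.1.trans (card_le_card fun i hi => ?_), fun hr => h.2 hr⟩
  exact mem_filter.mpr ⟨mem_univ i, (mem_filter.mp hi).2.trans hr⟩

lemma measurable_kthSmallestSq (hk : 1 ≤ k) (hkd : k ≤ d) : Measurable (kthSmallestSq d k) := by
  refine measurable_of_Iic fun r => ?_
  have : kthSmallestSq d k ⁻¹' Set.Iic r = {x | k ≤ ∑ i, if x i ^ 2 ≤ r then 1 else 0} := by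
    ext x
    rw [Set.mem_preimage, Set.mem_Iic, kthSmallestSq_le_iff x hk hkd, card_filter]; rfl
  rw [this]
  refine measurableSet_le measurable_const (Finset.measurable_sum _ fun i _ => ?_)
  exact Measurable.ite (measurableSet_le (by fun_prop) measurable_const) measurable_const
    measurable_const

lemma sumKSmallestSq_le_mul_kthSmallestSq (hk : 1 ≤ k) (hkd : k ≤ d) :
    sumKSmallestSq d k x ≤ k * kthSmallestSq d k x := by
  obtain ⟨S, hS, hcard⟩ := exists_subset_card_eq ((kthSmallestSq_le_iff x hk hkd).mp le_rfl)
  calc sumKSmallestSq d k x ≤ ∑ i ∈ S, x i ^ 2 := sumKSmallestSq_le_sum x hcard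
    _ ≤ ∑ _i ∈ S, kthSmallestSq d k x := sum_le_sum fun i hi => (mem_filter.mp (hS hi)).2
    _ = k * kthSmallestSq d k x := by rw [sum_const, hcard, nsmul_eq_mul]

end Selection

lemma exists_pairwise_disjoint_card_eq {k m d : ℕ} (h : k * m ≤ d) :
    ∃ G : Fin k → Finset (Fin d), Pairwise (Disjoint on G) ∧ ∀ j, #(G j) = m := by
  let e : Fin k × Fin m ↪ Fin d := finProdFinEquiv.toEmbedding.trans (Fin.castLEEmb h)
  refine ⟨fun j => ({j} ×ˢ univ).map e, fun j j' hjj' => ?_, fun j => by simp⟩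
  rw [onFun, disjoint_map, disjoint_product]
  exact .inl (disjoint_singleton.mpr hjj')

noncomputable def sqGaussianTail (t : ℝ) : ℝ := (gaussianReal 0 1).real {s | t < s ^ 2}

lemma sqGaussianTail_nonneg (t : ℝ) : 0 ≤ sqGaussianTail t := measureReal_nonneg

lemma sqGaussianTail_antitone : Antitone sqGaussianTail := fun _ _ h =>
  measureReal_mono fun _ hs => h.trans_lt hs

lemma one_div_eight_le_gaussianPDFReal {x : ℝ} (hx : |x| ≤ 1) :
    1 / 8 ≤ gaussianPDFReal 0 1 x := by
  have hsqrt : √(2 * π) ≤ 4 := by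
    rw [show (4 : ℝ) = √16 by rw [show (16 : ℝ) = 4 ^ 2 by norm_num, sqrt_sq (by norm_num)]]
    exact sqrt_le_sqrt (by linarith [pi_le_four])
  have hexp : 1 / 2 ≤ exp (-x ^ 2 / 2) := by
    have := add_one_le_exp (-x ^ 2 / 2)
    nlinarith [sq_abs x, abs_nonneg x]
  rw [gaussianPDFReal]
  push_cast
  rw [mul_one, mul_one, sub_zero]
  calc (1 / 8 : ℝ) = 4⁻¹ * (1 / 2) := by norm_num
    _ ≤ (√(2 * π))⁻¹ * exp (-x ^ 2 / 2) :=
      mul_le_mul (inv_anti₀ (by positivity) hsqrt) hexp (by norm_num) (by positivity)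

lemma div_four_le_gaussianReal_Icc {a : ℝ} (ha0 : 0 ≤ a) (ha1 : a ≤ 1) :
    a / 4 ≤ (gaussianReal 0 1).real (Set.Icc (-a) a) := by
  rw [measureReal_def, gaussianReal_apply_eq_integral 0 one_ne_zero,
    ENNReal.toReal_ofReal
      (setIntegral_nonneg measurableSet_Icc fun x _ => gaussianPDFReal_nonneg 0 1 x)]
  calc a / 4 = ∫ _ in Set.Icc (-a) a, (1 / 8 : ℝ) := by
        rw [setIntegral_const, measureReal_def, Real.volume_Icc,
          ENNReal.toReal_ofReal (by linarith), smul_eq_mul]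
        ring
    _ ≤ ∫ x in Set.Icc (-a) a, gaussianPDFReal 0 1 x :=
      setIntegral_mono_on (integrableOn_const measure_Icc_lt_top.ne)
        (integrable_gaussianPDFReal 0 1).integrableOn measurableSet_Icc fun x hx =>
          one_div_eight_le_gaussianPDFReal (abs_le.mpr ⟨by linarith [hx.1], by linarith [hx.2]⟩)

lemma sqGaussianTail_le_one_sub_sqrt {t : ℝ} (ht0 : 0 ≤ t) (ht1 : t ≤ 1) :
    sqGaussianTail t ≤ 1 - √t / 4 := by
  have hcompl : {s : ℝ | t < s ^ 2} = {s | s ^ 2 ≤ t}ᶜ := by ext; simp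
  have hIcc : Set.Icc (-√t) √t ⊆ {s | s ^ 2 ≤ t} := fun s hs => by
    simpa [sq_sqrt ht0] using sq_le_sq' hs.1 hs.2
  rw [sqGaussianTail, hcompl,
    probReal_compl_eq_one_sub (measurableSet_le (by fun_prop) (by fun_prop))]
  linarith [div_four_le_gaussianReal_Icc (sqrt_nonneg t) (sqrt_le_one.mpr ht1),
    measureReal_mono (μ := gaussianReal 0 1) hIcc]

lemma sqGaussianTail_le_inv {t : ℝ} (ht : 0 < t) : sqGaussianTail t ≤ t⁻¹ := by
  have hsub : {s : ℝ | t < s ^ 2} ⊆ {s | √t ≤ |id s - ∫ x, x ∂gaussianReal 0 1|} := fun s hs => by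
    simpa [integral_id_gaussianReal, ← sqrt_sq_eq_abs] using sqrt_le_sqrt hs.le
  have hcheb := meas_ge_le_variance_div_sq (memLp_id_gaussianReal (μ := 0) (v := 1) 2)
    (sqrt_pos.mpr ht)
  rw [variance_id_gaussianReal, sq_sqrt ht.le] at hcheb
  calc sqGaussianTail t ≤ _ := measureReal_mono hsub
    _ ≤ (1 : NNReal) / t := ENNReal.toReal_le_of_le_ofReal (by positivity) hcheb
    _ = t⁻¹ := by simp

lemma sqGaussianTail_pow_le_exp {t : ℝ} (ht0 : 0 ≤ t) (ht1 : t ≤ 1) (m : ℕ) :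
    sqGaussianTail t ^ m ≤ exp (-(m / 4) * t ^ (1 / 2 : ℝ)) := by
  rw [← sqrt_eq_rpow, show -((m : ℝ) / 4) * √t = m * (-(√t / 4)) by ring, exp_nat_mul]
  refine pow_le_pow_left₀ (sqGaussianTail_nonneg t) ?_ m
  linarith [sqGaussianTail_le_one_sub_sqrt ht0 ht1, add_one_le_exp (-(√t / 4))]

lemma sqGaussianTail_pow_le_of_one_le {t : ℝ} (ht : 1 ≤ t) {m : ℕ} (hm : 2 ≤ m) :
    sqGaussianTail t ^ m ≤ (3 / 4) ^ (m - 2) * t ^ (-2 : ℝ) := by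
  have h34 : sqGaussianTail t ≤ 3 / 4 := by
    have := sqGaussianTail_le_one_sub_sqrt zero_le_one le_rfl
    rw [sqrt_one] at this
    linarith [sqGaussianTail_antitone ht]
  have hsq : sqGaussianTail t ^ 2 ≤ t ^ (-2 : ℝ) := by
    rw [rpow_neg (by linarith), rpow_two, ← inv_pow]
    exact pow_le_pow_left₀ (sqGaussianTail_nonneg t) (sqGaussianTail_le_inv (by linarith)) 2
  rw [← Nat.sub_add_cancel hm, pow_add, Nat.add_sub_cancel]
  exact mul_le_mul (pow_le_pow_left₀ (sqGaussianTail_nonneg t) h34 _) hsq (by positivity)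
    (by positivity)

lemma three_quarters_pow_sub_two_le {m : ℕ} (hm : 2 ≤ m) : (3 / 4 : ℝ) ^ (m - 2) ≤ 64 / m ^ 2 := by
  have hm0 : (0 : ℝ) < m := by exact_mod_cast (by omega : 0 < m)
  have hquad : (m : ℝ) ^ 2 / 32 ≤ exp (m / 4) := by
    have := pow_div_factorial_le_exp (x := m / 4) (by positivity) 2
    norm_num [div_pow] at this
    linarith
  have hhalf : exp (1 / 2) ≤ 2 := by
    have := add_one_le_exp (-(1 / 2))
    have : exp (1 / 2) * exp (-(1 / 2)) = 1 := by rw [← exp_add]; norm_num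
    nlinarith [exp_pos (1 / 2)]
  calc (3 / 4 : ℝ) ^ (m - 2) ≤ exp (-(1 / 4)) ^ (m - 2) :=
        pow_le_pow_left₀ (by norm_num) (by linarith [add_one_le_exp (-(1 / 4 : ℝ))]) _
    _ = exp (1 / 2) / exp (m / 4) := by
        rw [← exp_nat_mul, ← exp_sub, Nat.cast_sub hm]
        ring_nf
    _ ≤ 2 / (m ^ 2 / 32) := div_le_div₀ (by norm_num) hhalf (by positivity) hquad
    _ = 64 / m ^ 2 := by field_simp; norm_num

lemma integral_exp_neg_mul_sqrt {b : ℝ} (hb : 0 < b) :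
    ∫ t in Set.Ioi 0, exp (-b * t ^ (1 / 2 : ℝ)) = 2 / b ^ 2 := by
  rw [integral_exp_neg_mul_rpow (by norm_num) hb,
    show (1 : ℝ) / (1 / 2) + 1 = (2 : ℕ) + 1 by norm_num, Gamma_nat_eq_factorial,
    show (-1 : ℝ) / (1 / 2) = -(2 : ℕ) by norm_num, rpow_neg hb.le, rpow_natCast]
  norm_num [div_eq_mul_inv, mul_comm]

lemma integral_sqGaussianTail_pow_le {m : ℕ} (hm : 2 ≤ m) :
    ∫ t in Set.Ioi 0, sqGaussianTail t ^ m ≤ 96 / m ^ 2 := by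
  have hb : (0 : ℝ) < m / 4 := by positivity
  set tail : ℝ → ℝ := fun t => (3 / 4) ^ (m - 2) * t ^ (-2 : ℝ)
  have hexp : IntegrableOn (fun t => exp (-(m / 4) * t ^ (1 / 2 : ℝ))) (Set.Ioi 0) := by
    simpa using integrableOn_rpow_mul_exp_neg_mul_rpow (s := 0) (by norm_num) (by norm_num) hb
  have htail : IntegrableOn tail (Set.Ioi 1) :=
    (integrableOn_Ioi_rpow_of_lt (by norm_num) one_pos).const_mul _
  have hdom : ∀ t ∈ Set.Ioi (0 : ℝ), sqGaussianTail t ^ m ≤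
      exp (-(m / 4) * t ^ (1 / 2 : ℝ)) + (Set.Ioi 1).indicator tail t := by
    intro t ht
    by_cases ht1 : t ≤ 1
    · have := sqGaussianTail_pow_le_exp (le_of_lt ht) ht1 m
      have : 0 ≤ (Set.Ioi 1).indicator tail t := Set.indicator_nonneg (fun s hs => by
        have : (0 : ℝ) < s := one_pos.trans hs
        positivity) t
      linarith
    · rw [Set.indicator_of_mem (show t ∈ Set.Ioi 1 from not_le.mp ht1)]
      linarith [sqGaussianTail_pow_le_of_one_le (not_le.mp ht1).le hm,
        exp_pos (-(m / 4) * t ^ (1 / 2 : ℝ))]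
  calc ∫ t in Set.Ioi 0, sqGaussianTail t ^ m
      ≤ ∫ t in Set.Ioi 0, (exp (-(m / 4) * t ^ (1 / 2 : ℝ)) + (Set.Ioi 1).indicator tail t) :=
        integral_mono_of_nonneg (ae_of_all _ fun t => pow_nonneg (sqGaussianTail_nonneg t) m)
          (hexp.add (htail.integrable_indicator measurableSet_Ioi).integrableOn)
          ((ae_restrict_iff' measurableSet_Ioi).mpr (ae_of_all _ hdom))
    _ = 32 / m ^ 2 + (3 / 4) ^ (m - 2) := by
        rw [integral_add hexp (htail.integrable_indicator measurableSet_Ioi).integrableOn,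
          integral_exp_neg_mul_sqrt hb, setIntegral_indicator measurableSet_Ioi,
          Set.Ioi_inter_Ioi, sup_of_le_right zero_le_one, integral_const_mul,
          integral_Ioi_rpow_of_lt (by norm_num) one_pos]
        field_simp
        ring
    _ ≤ 96 / m ^ 2 := by
        linarith [three_quarters_pow_sub_two_le hm,
          show (96 : ℝ) / m ^ 2 = 32 / m ^ 2 + 64 / m ^ 2 by ring]

local notation "𝒩" d => Measure.pi fun _ : Fin d => gaussianReal 0 1

section StandardGaussian

variable {d : ℕ}

lemma integrable_of_le_sum_sq {f : (Fin d → ℝ) → ℝ} (hf : Measurable f) (h0 : ∀ x, 0 ≤ f x)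
    (hle : ∀ x, f x ≤ ∑ i, x i ^ 2) : Integrable f (𝒩 d) := by
  have hsq (i : Fin d) : Integrable (fun x : Fin d → ℝ => x i ^ 2) (𝒩 d) :=
    (measurePreserving_eval _ i).integrable_comp_of_integrable (g := fun s => s ^ 2)
      (memLp_id_gaussianReal (μ := 0) (v := 1) 2).integrable_sq
  refine (integrable_finsetSum univ fun i _ => hsq i).mono' hf.aestronglyMeasurable
    (ae_of_all _ fun x => ?_)
  rw [Real.norm_eq_abs, abs_of_nonneg (h0 x)]
  exact hle x

variable {G : Finset (Fin d)} (hG : G.Nonempty)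

lemma measurable_inf'_sq : Measurable fun x : Fin d → ℝ => G.inf' hG fun i => x i ^ 2 := by
  have : (fun x : Fin d → ℝ => G.inf' hG fun i => x i ^ 2) = G.inf' hG fun i x => x i ^ 2 :=
    funext fun x => (Finset.inf'_apply hG (fun i x => x i ^ 2) x).symm
  rw [this]
  exact Finset.inf'_induction hG _ (fun _ hf _ hg => hf.inf hg) fun i _ => by fun_prop

lemma measureReal_lt_inf'_sq (t : ℝ) :
    (𝒩 d).real {x | t < G.inf' hG fun i => x i ^ 2} = sqGaussianTail t ^ #G := by
  have : {x : Fin d → ℝ | t < G.inf' hG fun i => x i ^ 2} =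
      (G : Set (Fin d)).pi fun _ => {s | t < s ^ 2} := by
    ext x
    simp [Finset.lt_inf'_iff]
  rw [this, measureReal_def, Measure.pi_pi_finset, prod_const, ENNReal.toReal_pow]
  rfl

lemma inf'_sq_nonneg (x : Fin d → ℝ) : 0 ≤ G.inf' hG fun i => x i ^ 2 :=
  le_inf' hG _ fun _ _ => sq_nonneg _

lemma integrable_inf'_sq : Integrable (fun x => G.inf' hG fun i => x i ^ 2) (𝒩 d) := by
  have ⟨i₀, hi₀⟩ := hG
  exact integrable_of_le_sum_sq (measurable_inf'_sq hG) (inf'_sq_nonneg hG) fun x =>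
    (inf'_le _ hi₀).trans (single_le_sum (fun i _ => sq_nonneg (x i)) (mem_univ i₀))

lemma integral_inf'_sq_le (h2 : 2 ≤ #G) :
    ∫ x, (G.inf' hG fun i => x i ^ 2) ∂(𝒩 d) ≤ 96 / #G ^ 2 := by
  rw [(integrable_inf'_sq hG).integral_eq_integral_meas_lt (ae_of_all _ (inf'_sq_nonneg hG))]
  simp_rw [measureReal_lt_inf'_sq hG]
  exact integral_sqGaussianTail_pow_le h2

end StandardGaussian

lemma one_div_sq_natDiv_le {d k : ℕ} (hk : 0 < k) (hkd : k ≤ d) :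
    1 / ((d / k : ℕ) : ℝ) ^ 2 ≤ 4 * ((k : ℝ) / d) ^ 2 := by
  set m := d / k
  have hm : 0 < m := Nat.div_pos hkd hk
  have hdm : d ≤ 2 * k * m := by
    have h1 : d < m * k + k := Nat.lt_div_mul_add hk
    have h2 : k ≤ m * k := Nat.le_mul_of_pos_left k hm
    linarith [show 2 * k * m = m * k + m * k by ring]
  have hdm' : (d : ℝ) ≤ 2 * k * m := by exact_mod_cast hdm
  have hm' : (0 : ℝ) < m := by exact_mod_cast hm
  have hd' : (0 : ℝ) < d := by exact_mod_cast hk.trans_le hkd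
  calc 1 / (m : ℝ) ^ 2 = (1 / m) ^ 2 := by ring
    _ ≤ (2 * (k : ℝ) / d) ^ 2 :=
        pow_le_pow_left₀ (by positivity) (by rw [div_le_div_iff₀ hm' hd']; linarith) 2
    _ = 4 * ((k : ℝ) / d) ^ 2 := by ring

section Expectations

variable {d k : ℕ}

lemma integrable_sumKSmallestSq (hkd : k ≤ d) : Integrable (sumKSmallestSq d k) (𝒩 d) :=
  integrable_of_le_sum_sq measurable_sumKSmallestSq (sumKSmallestSq_nonneg · hkd)
    (sumKSmallestSq_le_sum_univ · hkd)

lemma integrable_kthSmallestSq (hk : 1 ≤ k) (hkd : k ≤ d) :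
    Integrable (kthSmallestSq d k) (𝒩 d) := by
  refine integrable_of_le_sum_sq (measurable_kthSmallestSq hk hkd) (fun x => ?_) (fun x => ?_) <;>
    obtain ⟨j, hj⟩ := exists_kthSmallestSq_eq x hk hkd <;> rw [hj]
  · exact sq_nonneg _
  · exact single_le_sum (fun i _ => sq_nonneg (x i)) (mem_univ j)

theorem integral_sumKSmallestSq_le_mul_integral_kthSmallestSq (hk : 1 ≤ k) (hkd : k ≤ d) :
    ∫ x, sumKSmallestSq d k x ∂(𝒩 d) ≤ k * ∫ x, kthSmallestSq d k x ∂(𝒩 d) := by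
  rw [← integral_const_mul]
  exact integral_mono (integrable_sumKSmallestSq hkd)
    ((integrable_kthSmallestSq hk hkd).const_mul _) (sumKSmallestSq_le_mul_kthSmallestSq · hk hkd)

theorem integral_sumKSmallestSq_le (hk : 1 ≤ k) (hkd : 2 * k ≤ d) :
    ∫ x, sumKSmallestSq d k x ∂(𝒩 d) ≤ 4 * k * ((k : ℝ) / d) ^ 2 * 96 := by
  set m := d / k
  have hm : 2 ≤ m := (Nat.le_div_iff_mul_le hk).mpr (by linarith)
  obtain ⟨G, hdisj, hcard⟩ := exists_pairwise_disjoint_card_eq (Nat.mul_div_le d k)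
  have hne (j : Fin k) : (G j).Nonempty := card_pos.mp (by rw [hcard j]; omega)
  calc ∫ x, sumKSmallestSq d k x ∂(𝒩 d)
      ≤ ∫ x, ∑ j, (G j).inf' (hne j) (fun i => x i ^ 2) ∂(𝒩 d) :=
        integral_mono (integrable_sumKSmallestSq (by omega))
          (integrable_finsetSum _ fun j _ => integrable_inf'_sq (hne j))
          fun x => by simpa using sumKSmallestSq_le_sum_inf' x G hdisj hne
    _ = ∑ j, ∫ x, (G j).inf' (hne j) (fun i => x i ^ 2) ∂(𝒩 d) :=
        integral_finsetSum _ fun j _ => integrable_inf'_sq (hne j)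
    _ ≤ ∑ _j : Fin k, 96 / (m : ℝ) ^ 2 :=
        sum_le_sum fun j _ => by
          simpa [hcard j] using integral_inf'_sq_le (hne j) (by rw [hcard j]; exact hm)
    _ = k * 96 * (1 / (m : ℝ) ^ 2) := by simp; ring
    _ ≤ k * 96 * (4 * ((k : ℝ) / d) ^ 2) :=
        mul_le_mul_of_nonneg_left (one_div_sq_natDiv_le hk (by omega)) (by positivity)
    _ = 4 * k * ((k : ℝ) / d) ^ 2 * 96 := by ring

end Expectations

/-- For i.i.d. standard Gaussian coordinates, `E[M_k] ≤ k · E[s_(k)²]`, and for `k ≤ d/2` the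
expectation `E[M_k]` is at most `4 k (k/d)² c` for a universal constant `c`; hence the expected
squared distortion `4 E[M_k]` of flipping the `k` smallest-magnitude coordinates is
`O(k³/d²)`. -/
theorem stmt_19 :
    (∀ d k : ℕ, 1 ≤ k → k ≤ d →
      ∫ x, sumKSmallestSq d k x ∂(Measure.pi fun _ : Fin d => gaussianReal 0 1)
        ≤ k * ∫ x, kthSmallestSq d k x ∂(Measure.pi fun _ : Fin d => gaussianReal 0 1)) ∧
    ∃ c : ℝ, 0 < c ∧ ∀ d k : ℕ, 1 ≤ k → 2 * k ≤ d →
      (∫ x, sumKSmallestSq d k x ∂(Measure.pi fun _ : Fin d => gaussianReal 0 1)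
          ≤ 4 * k * ((k : ℝ) / d) ^ 2 * c) ∧
      4 * ∫ x, sumKSmallestSq d k x ∂(Measure.pi fun _ : Fin d => gaussianReal 0 1)
          ≤ 16 * c * (k : ℝ) ^ 3 / (d : ℝ) ^ 2 := by
  refine ⟨fun d k => integral_sumKSmallestSq_le_mul_integral_kthSmallestSq, 96, by norm_num,
    fun d k hk hkd => ⟨integral_sumKSmallestSq_le hk hkd, ?_⟩⟩
  have hd : (d : ℝ) ≠ 0 := by norm_cast; omega
  calc 4 * ∫ x, sumKSmallestSq d k x ∂(Measure.pi fun _ : Fin d => gaussianReal 0 1)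
      ≤ 4 * (4 * k * ((k : ℝ) / d) ^ 2 * 96) := by linarith [integral_sumKSmallestSq_le hk hkd]
    _ = 16 * 96 * (k : ℝ) ^ 3 / (d : ℝ) ^ 2 := by field_simp; ring
end
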